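/- arXiv:1409.0215 — 7 statements merged into one kernel-verified Lean document; each statement's English description precedes it below -/
import Mathlib

section
/- For every integer p ≥ 2, the real number 2·cos(π/(2p)) does not belong to the subfield ℚ(4·cos²(π/(2p))) of ℝ, i.e. 2·cos(π/(2p)) is not an element of the intermediate field of ℝ/ℚ generated over ℚ by the single element (2·cos(π/(2p)))². -/
/-!
Let `t = 2 cos (π / (2p)) = ζ + ζ⁻¹` with `ζ = exp (2πi / (4p))`. Since `4 ∣ 4p`, `-ζ = ζ ^ (2p + 1)`
is again a primitive `4p`-th root of unity, hence a Galois conjugate of `ζ` over `ℚ`; therefore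
every rational polynomial vanishing at `t` also vanishes at `-ζ - ζ⁻¹ = -t`. If `t = r(t²) / s(t²)`,
the polynomial `X s(X²) - r(X²)` vanishes at `t`, hence at `-t`, which forces `2 t s(t²) = 0`,
impossible since `t > 0`.
-/

open Real IntermediateField Polynomial

theorem IsPrimitiveRoot.neg_of_four_mul {R : Type*} [CommRing R] [IsDomain R] {ζ : R} {k : ℕ}
    (hk : 0 < k) (h : IsPrimitiveRoot ζ (4 * k)) : IsPrimitiveRoot (-ζ) (4 * k) := by
  have hhalf : ζ ^ (2 * k) = -1 :=
    (h.pow (by omega) (by ring : 4 * k = 2 * k * 2)).eq_neg_one_of_two_right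
  have hcop : (2 * k + 1).Coprime (4 * k) := by
    rw [show 4 * k = 2 * (2 * k) by ring]
    exact Nat.Coprime.mul_right (by simp) (by simp)
  simpa [pow_succ, hhalf] using h.pow_of_coprime _ hcop

theorem IsPrimitiveRoot.isConjRoot_rat {K : Type*} [Field K] [CharZero K] {n : ℕ} (hn : 0 < n)
    {ζ ζ' : K} (h : IsPrimitiveRoot ζ n) (h' : IsPrimitiveRoot ζ' n) : IsConjRoot ℚ ζ ζ' :=
  (cyclotomic_eq_minpoly_rat h hn).symm.trans (cyclotomic_eq_minpoly_rat h' hn)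

theorem IsConjRoot.aeval_add_inv_eq_zero {K L : Type*} [Field K] [Field L] [Algebra K L]
    {x y : L} (hx : IsIntegral K x) (hxy : IsConjRoot K x y) {m : K[X]}
    (hm : aeval (x + x⁻¹) m = 0) : aeval (y + y⁻¹) m = 0 := by
  have := Fact.mk (minpoly.irreducible hx)
  -- `x + x⁻¹` and `y + y⁻¹` are images of one element of `K[X] / (minpoly K x)` under embeddings.
  let u : AdjoinRoot (minpoly K x) := AdjoinRoot.root _ + (AdjoinRoot.root _)⁻¹
  have hφ {z : L} (hz : aeval z (minpoly K x) = 0) :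
      ∃ φ : AdjoinRoot (minpoly K x) →ₐ[K] L, φ u = z + z⁻¹ :=
    ⟨AdjoinRoot.liftAlgHom _ (Algebra.ofId K L) z hz, by
      have hroot := AdjoinRoot.liftAlgHom_root (minpoly K x) (Algebra.ofId K L) z hz
      simp only [u, map_add, map_inv₀, hroot]⟩
  obtain ⟨φx, hφx⟩ := hφ (minpoly.aeval K x)
  obtain ⟨φy, hφy⟩ := hφ hxy.aeval_eq_zero
  have hu : aeval u m = 0 :=
    φx.toRingHom.injective <| by simpa [← aeval_algHom_apply, hφx] using hm
  rw [← hφy, aeval_algHom_apply, hu, map_zero]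

theorem IntermediateField.notMem_adjoin_sq_of_aeval_neg_eq_zero {K L : Type*} [Field K]
    [Field L] [Algebra K L] [NeZero (2 : L)] {x : L} (hx : x ≠ 0)
    (h : ∀ m : K[X], aeval x m = 0 → aeval (-x) m = 0) : x ∉ K⟮x ^ 2⟯ := by
  intro hmem
  obtain ⟨r, s, hrs⟩ := (mem_adjoin_simple_iff K x).mp hmem
  have hs : aeval (x ^ 2) s ≠ 0 := by
    rintro h0
    rw [h0, div_zero] at hrs
    exact hx hrs
  have hxs : x * aeval (x ^ 2) s = aeval (x ^ 2) r := (eq_div_iff hs).mp hrs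
  have hF := h (X * s.comp (X ^ 2) - r.comp (X ^ 2)) (by simp [aeval_comp, hxs])
  simp only [map_sub, map_mul, aeval_X, aeval_comp, map_pow, neg_sq, ← hxs] at hF
  have : 2 * (x * aeval (x ^ 2) s) = 0 := by linear_combination -hF
  simp only [mul_eq_zero, two_ne_zero, hx, hs, or_self] at this

theorem Complex.ofReal_two_cos_eq_exp_add_inv (θ : ℝ) :
    ((2 * Real.cos θ : ℝ) : ℂ) = exp (θ * I) + (exp (θ * I))⁻¹ := by
  rw [← Complex.exp_neg, ← neg_mul]; push_cast; exact Complex.two_cos _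

theorem aeval_neg_two_cos_pi_div_eq_zero {p : ℕ} (hp : 0 < p) {m : ℚ[X]}
    (hm : aeval (2 * cos (π / (2 * p))) m = 0) : aeval (-(2 * cos (π / (2 * p)))) m = 0 := by
  set ζ := Complex.exp (2 * π * Complex.I / (4 * p : ℕ))
  have hζ : IsPrimitiveRoot ζ (4 * p) := Complex.isPrimitiveRoot_exp _ (by omega)
  have hcos : ((2 * cos (π / (2 * p)) : ℝ) : ℂ) = ζ + ζ⁻¹ := by
    have hangle : ((π / (2 * p) : ℝ) : ℂ) * Complex.I = 2 * π * Complex.I / (4 * p : ℕ) := by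
      push_cast; field_simp; ring
    rw [Complex.ofReal_two_cos_eq_exp_add_inv, hangle]
  have hmC : aeval (ζ + ζ⁻¹) m = 0 := by
    rw [← hcos, ← Complex.coe_algebraMap, aeval_algebraMap_apply, hm, map_zero]
  have hconj := (hζ.isConjRoot_rat (by omega) (hζ.neg_of_four_mul hp)).aeval_add_inv_eq_zero
    (hζ.isIntegral (by omega)).tower_top hmC
  rw [inv_neg, ← neg_add, ← hcos, ← Complex.ofReal_neg, ← Complex.coe_algebraMap,
    aeval_algebraMap_apply] at hconj
  exact (FaithfulSMul.algebraMap_eq_zero_iff ℝ ℂ).mp hconj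

theorem stmt_0 (p : ℕ) (hp : 2 ≤ p) :
    (2 * Real.cos (Real.pi / (2 * p))) ∉
      IntermediateField.adjoin ℚ ({(2 * Real.cos (Real.pi / (2 * p))) ^ 2} : Set ℝ) := by
  have hangle : π / (2 * p) < π / 2 := by
    gcongr
    linarith [show (2 : ℝ) ≤ p by exact_mod_cast hp]
  have hpos : 0 < 2 * cos (π / (2 * p)) := by
    have : 0 < π / (2 * p) := by positivity
    exact mul_pos two_pos (cos_pos_of_mem_Ioo ⟨by linarith, hangle⟩)
  exact notMem_adjoin_sq_of_aeval_neg_eq_zero hpos.ne' fun _ ↦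
    aeval_neg_two_cos_pi_div_eq_zero (by omega)
end

section
/- For every integer p ≥ 2, the real number cos(π/(2p)) does not belong to the subfield ℚ(cos(π/p)) of ℝ, i.e. cos(π/(2p)) is not an element of the intermediate field of ℝ/ℚ generated over ℚ by cos(π/p). -/
/-!
With `ζ = exp (π i / 2p)`, a primitive `4p`-th root of unity, `x = cos (π / 2p) = (ζ + ζ⁻¹) / 2`
and `cos (π / p) = 2 x² - 1`. Since `2p + 1` is prime to `4p`, `-ζ = ζ ^ (2p + 1)` is a Galois
conjugate of `ζ`, so `-x = (-ζ + (-ζ)⁻¹) / 2` is a conjugate of `x` over `ℚ`. If `x` were a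
rational function of `x²`, the same relation would hold for `-x`, forcing `x = -x`.
-/

open Real IntermediateField Polynomial

section Conjugates

variable {K L : Type*} [Field K] [Field L] [Algebra K L]

theorem isConjRoot_algHom_apply {F : Type*} [Field F] [Algebra K F] (f g : F →ₐ[K] L) (y : F) :
    IsConjRoot K (f y) (g y) :=
  (minpoly.algHom_eq f f.injective y).trans (minpoly.algHom_eq g g.injective y).symm

theorem IsConjRoot.exists_algHom_adjoin {ζ η : L} (hζ : IsIntegral K ζ) (h : IsConjRoot K ζ η) :
    ∃ σ : K⟮ζ⟯ →ₐ[K] L, σ (AdjoinSimple.gen K ζ) = η :=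
  ⟨(algHomAdjoinIntegralEquiv K hζ).symm ⟨η, mem_aroots.mpr ⟨minpoly.ne_zero hζ, h.aeval_eq_zero⟩⟩,
    algHomAdjoinIntegralEquiv_symm_apply_gen K hζ _⟩

theorem IsConjRoot.add_inv_div_two {ζ η : L} (hζ : IsIntegral K ζ) (h : IsConjRoot K ζ η) :
    IsConjRoot K ((ζ + ζ⁻¹) / 2) ((η + η⁻¹) / 2) := by
  obtain ⟨σ, hσ⟩ := h.exists_algHom_adjoin hζ
  have := isConjRoot_algHom_apply K⟮ζ⟯.val σ
    ((AdjoinSimple.gen K ζ + (AdjoinSimple.gen K ζ)⁻¹) / 2)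
  simpa only [map_div₀, map_add, map_inv₀, map_ofNat, hσ, coe_val, AdjoinSimple.coe_gen] using this

theorem IsPrimitiveRoot.isConjRoot_rat_s1 [CharZero L] {n : ℕ} {ζ η : L} (hn : 0 < n)
    (hζ : IsPrimitiveRoot ζ n) (hη : IsPrimitiveRoot η n) : IsConjRoot ℚ ζ η := by
  rw [isConjRoot_def, ← cyclotomic_eq_minpoly_rat hζ hn, ← cyclotomic_eq_minpoly_rat hη hn]

theorem notMem_adjoin_sq_of_isConjRoot_neg [NeZero (2 : L)] {x : L} (h : IsConjRoot K x (-x))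
    (hx : x ≠ 0) : x ∉ K⟮x ^ 2⟯ := by
  rw [mem_adjoin_simple_iff]
  rintro ⟨r, s, hrs⟩
  have hs : aeval (x ^ 2) s ≠ 0 := fun hs ↦ hx (by rw [hrs, hs, div_zero])
  have hxs : x * aeval (x ^ 2) s = aeval (x ^ 2) r := (eq_div_iff hs).mp hrs
  set U : K[X] := X * s.comp (X ^ 2) - r.comp (X ^ 2)
  have hU : aeval x U = 0 := by
    simp only [U, map_sub, map_mul, aeval_X, aeval_comp, map_pow, hxs, sub_self]
  have hU_neg : aeval (-x) U = 0 :=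
    aeval_eq_zero_of_dvd_aeval_eq_zero (minpoly.dvd K x hU) h.aeval_eq_zero
  simp only [U, map_sub, map_mul, aeval_X, aeval_comp, map_pow, neg_sq] at hU_neg
  have h2xs : 2 * x * aeval (x ^ 2) s = 0 := by linear_combination hxs - hU_neg
  exact hs ((mul_eq_zero.mp h2xs).resolve_left (mul_ne_zero two_ne_zero hx))

end Conjugates

theorem Real.isConjRoot_cos_two_pi_mul_div {n k : ℕ} (hn : n ≠ 0) (hk : k.Coprime n) :
    IsConjRoot ℚ (cos (2 * π / n)) (cos (2 * π * k / n)) := by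
  have hζ := Complex.isPrimitiveRoot_exp n hn
  have hconj := (hζ.isConjRoot_rat_s1 (Nat.pos_of_ne_zero hn)
    (Complex.isPrimitiveRoot_exp_of_coprime k n hn hk)).add_inv_div_two
    (hζ.isIntegral (Nat.pos_of_ne_zero hn)).tower_top
  have hcos (θ : ℝ) : (Complex.exp (θ * Complex.I) + (Complex.exp (θ * Complex.I))⁻¹) / 2 =
      (cos θ : ℂ) := by
    rw [Complex.ofReal_cos, Complex.cos, ← Complex.exp_neg, neg_mul]
  have h1 : 2 * π * Complex.I / n = ((2 * π / n : ℝ) : ℂ) * Complex.I := by push_cast; ring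
  have h2 : 2 * π * Complex.I * (k / n) = ((2 * π * k / n : ℝ) : ℂ) * Complex.I := by
    push_cast; ring
  rw [h1, h2, hcos, hcos] at hconj
  exact (isConjRoot_algHom_iff (Complex.ofRealAm.restrictScalars ℚ)).mp hconj

theorem stmt_1 (p : ℕ) (hp : 2 ≤ p) :
    Real.cos (Real.pi / (2 * p)) ∉
      IntermediateField.adjoin ℚ ({Real.cos (Real.pi / p)} : Set ℝ) := by
  set x := cos (π / (2 * p))
  have hx0 : x ≠ 0 := by
    have hp1 : (1 : ℝ) < p := by exact_mod_cast hp
    refine (cos_pos_of_mem_Ioo ⟨by linarith [pi_pos, show 0 < π / (2 * p) by positivity], ?_⟩).ne'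
    exact div_lt_div_of_pos_left pi_pos two_pos (by linarith)
  have hconj : IsConjRoot ℚ x (-x) := by
    have hcop : (2 * p + 1).Coprime (4 * p) := by
      rw [show 4 * p = 2 * (2 * p) by ring]
      simp [Nat.coprime_mul_iff_right]
    have h1 : 2 * π / ((4 * p : ℕ) : ℝ) = π / (2 * p) := by push_cast; field_simp; ring
    have h2 : 2 * π * ((2 * p + 1 : ℕ) : ℝ) / ((4 * p : ℕ) : ℝ) = π / (2 * p) + π := by
      push_cast; field_simp; ring
    simpa only [h1, h2, cos_add_pi] using isConjRoot_cos_two_pi_mul_div (by omega) hcop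
  have hcos : cos (π / p) = 2 * x ^ 2 - 1 := by
    rw [← cos_two_mul]; congr 1; field_simp
  have hle : ℚ⟮cos (π / p)⟯ ≤ ℚ⟮x ^ 2⟯ := by
    rw [adjoin_simple_le_iff, hcos]
    exact sub_mem (mul_mem (ofNat_mem _ 2) (mem_adjoin_simple_self ℚ _)) (one_mem _)
  exact fun hmem ↦ notMem_adjoin_sq_of_isConjRoot_neg hconj hx0 (hle hmem)
end

section
/- For every integer n ≥ 3, the real number cos(2π/n) is algebraic over ℚ and the natural degree of its minimal polynomial over ℚ equals φ(n)/2, where φ is Euler's totient function. -/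
/-!
With `ζ = exp (2πi/n)` a primitive `n`-th root of unity, `[ℚ(ζ) : ℚ] = φ(n)`. Since
`ζ + ζ⁻¹ = 2 cos (2π/n)`, the field `ℚ(cos (2π/n))` lies inside `ℚ(ζ)` and `ζ` is a root of
`X² - 2 cos (2π/n) X + 1` over it; as this field is real and `ζ` is not (because `n ≥ 3`),
`[ℚ(ζ) : ℚ(cos (2π/n))] = 2`, and the tower law gives degree `φ(n)/2`.
-/

open Polynomial IntermediateField Module

section QuadraticSubextension

variable {F E : Type*} [Field F] [Field E] [Algebra F E]

theorem finrank_adjoin_simple_eq_two_of_add_inv_eq_algebraMap {z : E} {b : F}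
    (hb : z + z⁻¹ = algebraMap F E b) (hz : z ∉ (algebraMap F E).range) :
    finrank F F⟮z⟯ = 2 := by
  have hz0 : z ≠ 0 := by
    rintro rfl
    exact hz ⟨0, map_zero _⟩
  set p : F[X] := X ^ 2 - C b * X + 1 with hp
  have hmonic : p.Monic := by rw [hp]; monicity!
  have hdeg : p.natDegree = 2 := by rw [hp]; compute_degree!
  have hroot : aeval z p = 0 := by
    simp only [hp, map_add, map_sub, map_mul, map_pow, aeval_X, aeval_C, map_one, ← hb]
    field_simp
    ring
  have hint : IsIntegral F z := ⟨p, hmonic, hroot⟩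
  rw [adjoin.finrank hint]
  refine le_antisymm ?_ ((minpoly.two_le_natDegree_iff hint).2 hz)
  exact hdeg ▸ natDegree_le_natDegree (minpoly.min F z hmonic hroot)

theorem finrank_adjoin_simple_eq_two_mul_finrank_adjoin_add_inv {z : E}
    (hz : z ∉ F⟮z + z⁻¹⟯) : finrank F F⟮z⟯ = 2 * finrank F F⟮z + z⁻¹⟯ := by
  have hz_mem : z ∈ F⟮z⟯ := mem_adjoin_simple_self F z
  have hle : F⟮z + z⁻¹⟯ ≤ F⟮z⟯ := adjoin_simple_le_iff.2 (add_mem hz_mem (inv_mem hz_mem))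
  have hquad : finrank F⟮z + z⁻¹⟯ F⟮z + z⁻¹⟯⟮z⟯ = 2 :=
    finrank_adjoin_simple_eq_two_of_add_inv_eq_algebraMap
      (b := ⟨z + z⁻¹, mem_adjoin_simple_self F _⟩) rfl (by simpa using hz)
  rw [← finrank_bot_mul_relfinrank hle, relfinrank_eq_finrank_of_le hle,
    extendScalars_adjoin hle, hquad, mul_comm]

theorem IntermediateField.adjoin_simple_algebraMap_mul {a : F} (ha : a ≠ 0) (x : E) :
    F⟮algebraMap F E a * x⟯ = F⟮x⟯ := by
  refine le_antisymm (adjoin_simple_le_iff.2 ?_) (adjoin_simple_le_iff.2 ?_)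
  · exact mul_mem (algebraMap_mem _ a) (mem_adjoin_simple_self F x)
  · have hx : x = algebraMap F E a⁻¹ * (algebraMap F E a * x) := by
      rw [← mul_assoc, ← map_mul, inv_mul_cancel₀ ha, map_one, one_mul]
    convert mul_mem (algebraMap_mem _ a⁻¹) (mem_adjoin_simple_self F (algebraMap F E a * x))

end QuadraticSubextension

namespace Complex

theorem im_eq_zero_of_mem_adjoin_ofReal {r : ℝ} {z : ℂ} (hz : z ∈ ℚ⟮(r : ℂ)⟯) : z.im = 0 := by
  have hle : ℚ⟮(r : ℂ)⟯ ≤ (IsScalarTower.toAlgHom ℚ ℝ ℂ).fieldRange :=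
    adjoin_simple_le_iff.2 ⟨r, rfl⟩
  obtain ⟨x, rfl⟩ := hle hz
  exact ofReal_im x

theorem ofReal_cos_eq_half_mul_exp_add_inv (x : ℝ) :
    (Real.cos x : ℂ) = algebraMap ℚ ℂ 2⁻¹ * (exp (x * I) + (exp (x * I))⁻¹) := by
  rw [← exp_neg, ofReal_cos, cos, map_inv₀, map_ofNat, neg_mul]
  ring

theorem isIntegral_cos_of_isIntegral_exp_mul_I {x : ℝ} (h : IsIntegral ℚ (exp (x * I))) :
    IsIntegral ℚ (Real.cos x) := by
  refine (isIntegral_algebraMap_iff ofReal_injective).1 ?_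
  change IsIntegral ℚ (Real.cos x : ℂ)
  rw [ofReal_cos_eq_half_mul_exp_add_inv]
  exact isIntegral_algebraMap.mul (h.add h.inv)

theorem finrank_adjoin_exp_mul_I {x : ℝ} (hsin : Real.sin x ≠ 0)
    (h : IsIntegral ℚ (exp (x * I))) :
    finrank ℚ ℚ⟮exp (x * I)⟯ = 2 * (minpoly ℚ (Real.cos x)).natDegree := by
  have hadj : ℚ⟮(Real.cos x : ℂ)⟯ = ℚ⟮exp (x * I) + (exp (x * I))⁻¹⟯ := by
    rw [ofReal_cos_eq_half_mul_exp_add_inv, adjoin_simple_algebraMap_mul (by norm_num)]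
  have hcos : (minpoly ℚ (Real.cos x)).natDegree = finrank ℚ ℚ⟮(Real.cos x : ℂ)⟯ := by
    have hint : IsIntegral ℚ (Real.cos x : ℂ) :=
      (isIntegral_algebraMap_iff ofReal_injective).2 (isIntegral_cos_of_isIntegral_exp_mul_I h)
    rw [adjoin.finrank hint]
    exact congrArg natDegree (minpoly.algebraMap_eq ofReal_injective _).symm
  rw [hcos, hadj]
  refine finrank_adjoin_simple_eq_two_mul_finrank_adjoin_add_inv fun hmem ↦ hsin ?_
  rw [← hadj] at hmem
  simpa [exp_ofReal_mul_I_im] using im_eq_zero_of_mem_adjoin_ofReal hmem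

end Complex

theorem stmt_3 (n : ℕ) (hn : 3 ≤ n) :
    IsAlgebraic ℚ (Real.cos (2 * Real.pi / n)) ∧
      (minpoly ℚ (Real.cos (2 * Real.pi / n))).natDegree = n.totient / 2 := by
  set θ : ℝ := 2 * Real.pi / n
  have hprim : IsPrimitiveRoot (Complex.exp (θ * Complex.I)) n := by
    convert Complex.isPrimitiveRoot_exp n (by omega) using 2
    push_cast [θ]
    ring
  have hint : IsIntegral ℚ (Complex.exp (θ * Complex.I)) :=
    (hprim.isIntegral (by omega)).tower_top
  have hsin : Real.sin θ ≠ 0 := by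
    have hθ_lt : θ < Real.pi := by
      rw [div_lt_iff₀ (by positivity)]
      have h3 : (3 : ℝ) ≤ n := by exact_mod_cast hn
      nlinarith [Real.pi_pos]
    exact (Real.sin_pos_of_pos_of_lt_pi (by positivity) hθ_lt).ne'
  have htotient : finrank ℚ ℚ⟮Complex.exp (θ * Complex.I)⟯ = n.totient := by
    rw [adjoin.finrank hint, ← cyclotomic_eq_minpoly_rat hprim (by omega), natDegree_cyclotomic]
  have hfinrank := Complex.finrank_adjoin_exp_mul_I hsin hint
  refine ⟨(Complex.isIntegral_cos_of_isIntegral_exp_mul_I hint).isAlgebraic, ?_⟩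
  omega
end

section
/- For every integer p ≥ 2 and all real numbers a, b belonging to the subfield ℚ(cos(π/p)) of ℝ: if a + b·(2·cos(π/(2p))) = 0, then a = 0 and b = 0. -/
/-!
For `ζ = exp(iπ/n)`, the field `ℚ(ζ)` is quadratic over `ℚ(cos(π/n))`, since `ζ` is a non-real
root of `X² - 2cos(π/n) X + 1` over a real field; hence `[ℚ(cos(π/n)) : ℚ] = φ(2n)/2`.
As `φ(4p) = 2φ(2p)`, the degree of `cos(π/(2p))` is twice that of `cos(π/p)`, so it does not lie
in `ℚ(cos(π/p))`, which forces `b = 0` and then `a = 0`.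
-/

open IntermediateField Module Polynomial Real ComplexConjugate

theorem IntermediateField.finrank_adjoin_simple_eq_two_of_quadratic {K L : Type*} [Field K]
    [Field L] [Algebra K L] {x : L} (a b : K)
    (hx : x ^ 2 + algebraMap K L a * x + algebraMap K L b = 0)
    (hxK : x ∉ (algebraMap K L).range) : finrank K K⟮x⟯ = 2 := by
  set q : K[X] := X ^ 2 + C a * X + C b
  have hq_monic : q.Monic := by unfold q; monicity!
  have hq_deg : q.natDegree = 2 := by unfold q; compute_degree!
  have hq_root : aeval x q = 0 := by simpa [q] using hx
  have hint : IsIntegral K x := ⟨q, hq_monic, by rwa [← aeval_def]⟩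
  have hle : (minpoly K x).natDegree ≤ 2 :=
    hq_deg ▸ natDegree_le_natDegree (minpoly.min K x hq_monic hq_root)
  have hpos : 0 < (minpoly K x).natDegree := minpoly.natDegree_pos hint
  have hne : (minpoly K x).natDegree ≠ 1 := fun h => hxK (minpoly.natDegree_eq_one_iff.mp h)
  rw [adjoin.finrank hint]
  omega

theorem Complex.adjoin_ofReal_eq_map (r : ℝ) :
    ℚ⟮(r : ℂ)⟯ = ℚ⟮r⟯.map (IsScalarTower.toAlgHom ℚ ℝ ℂ) := by
  rw [adjoin_map, Set.image_singleton]; rfl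

theorem Complex.finrank_adjoin_ofReal (r : ℝ) : finrank ℚ ℚ⟮(r : ℂ)⟯ = finrank ℚ ℚ⟮r⟯ := by
  rw [Complex.adjoin_ofReal_eq_map]
  exact (equivMap _ _).toLinearEquiv.finrank_eq.symm

theorem Complex.finrank_adjoin_eq_two_mul_finrank_adjoin_re {ζ : ℂ} (hζ : ‖ζ‖ = 1)
    (him : ζ.im ≠ 0) : finrank ℚ ℚ⟮ζ⟯ = 2 * finrank ℚ ℚ⟮ζ.re⟯ := by
  have hconj : conj ζ = ζ⁻¹ := by
    rw [Complex.inv_def, Complex.normSq_eq_norm_sq, hζ]; simp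
  have hre : (ζ.re : ℂ) = (ζ + ζ⁻¹) / 2 := by
    rw [← hconj, Complex.add_conj]; push_cast; ring
  have hζ0 : ζ ≠ 0 := by rintro rfl; simp at hζ
  have hquad : ζ ^ 2 + algebraMap ℚ⟮(ζ.re : ℂ)⟯ ℂ (-2 * AdjoinSimple.gen ℚ _) * ζ
      + algebraMap ℚ⟮(ζ.re : ℂ)⟯ ℂ 1 = 0 := by
    simp only [map_mul, map_neg, map_one, map_ofNat, AdjoinSimple.algebraMap_gen]
    rw [hre]; field_simp; ring
  have hnotin : ζ ∉ (algebraMap ℚ⟮(ζ.re : ℂ)⟯ ℂ).range := by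
    rintro ⟨⟨x, hx⟩, hxζ⟩
    obtain ⟨r, -, rfl⟩ := Complex.adjoin_ofReal_eq_map ζ.re ▸ hx
    exact him (hxζ ▸ Complex.ofReal_im r)
  have hrestrict : ℚ⟮(ζ.re : ℂ)⟯⟮ζ⟯.restrictScalars ℚ = ℚ⟮ζ⟯ := by
    refine (adjoin_simple_adjoin_simple ℚ (ζ.re : ℂ) ζ).trans ?_
    refine le_antisymm (adjoin_le_iff.mpr ?_) (adjoin.mono _ _ _ (by simp))
    rintro x (rfl | rfl)
    · rw [hre]
      have := mem_adjoin_simple_self ℚ ζ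
      exact div_mem (add_mem this (inv_mem this)) (ofNat_mem _ 2)
    · exact mem_adjoin_simple_self ℚ _
  rw [← Complex.finrank_adjoin_ofReal,
    ← finrank_adjoin_simple_eq_two_of_quadratic _ _ hquad hnotin, mul_comm, finrank_mul_finrank,
    ← hrestrict]
  rfl

theorem IsPrimitiveRoot.finrank_adjoin_rat {L : Type*} [Field L] [CharZero L] {ζ : L} {n : ℕ}
    (hζ : IsPrimitiveRoot ζ n) (hn : 0 < n) : finrank ℚ ℚ⟮ζ⟯ = n.totient := by
  rw [adjoin.finrank (hζ.isIntegral hn).tower_top, ← cyclotomic_eq_minpoly_rat hζ hn,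
    natDegree_cyclotomic]

theorem finrank_adjoin_cos_pi_div {n : ℕ} (hn : 2 ≤ n) :
    finrank ℚ ℚ⟮cos (π / n)⟯ = (2 * n).totient / 2 := by
  have hθ : 0 < π / n := by positivity
  have hθπ : π / n < π := div_lt_self pi_pos (by exact_mod_cast hn)
  set ζ := Complex.exp (↑(π / n) * Complex.I)
  have hζ : IsPrimitiveRoot ζ (2 * n) := by
    convert Complex.isPrimitiveRoot_exp (2 * n) (by omega) using 2
    push_cast; field_simp
  have hnorm : ‖ζ‖ = 1 := Complex.norm_exp_ofReal_mul_I _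
  have him : ζ.im ≠ 0 := by
    rw [Complex.exp_ofReal_mul_I_im]; exact (sin_pos_of_pos_of_lt_pi hθ hθπ).ne'
  have := Complex.finrank_adjoin_eq_two_mul_finrank_adjoin_re hnorm him
  rw [hζ.finrank_adjoin_rat (by omega), Complex.exp_ofReal_mul_I_re] at this
  omega

theorem cos_pi_div_two_mul_notMem_adjoin_cos_pi_div {p : ℕ} (hp : 2 ≤ p) :
    cos (π / (2 * p)) ∉ ℚ⟮cos (π / p)⟯ := by
  intro hmem
  have hdvd := finrank_dvd_of_le_right (adjoin_simple_le_iff.mpr hmem)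
  rw [show (2 * p : ℝ) = (2 * p : ℕ) by push_cast; rfl, finrank_adjoin_cos_pi_div (by omega),
    finrank_adjoin_cos_pi_div hp,
    Nat.totient_mul_of_prime_of_dvd Nat.prime_two (dvd_mul_right 2 p)] at hdvd
  have hpos : 0 < (2 * p).totient / 2 := by
    obtain ⟨k, hk⟩ := Nat.totient_even (show 2 < 2 * p by omega)
    have := Nat.totient_pos.mpr (show 0 < 2 * p by omega)
    omega
  have := Nat.le_of_dvd hpos hdvd
  omega

theorem stmt_5 (p : ℕ) (hp : 2 ≤ p) (a b : ℝ)
    (ha : a ∈ IntermediateField.adjoin ℚ ({Real.cos (Real.pi / p)} : Set ℝ))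
    (hb : b ∈ IntermediateField.adjoin ℚ ({Real.cos (Real.pi / p)} : Set ℝ))
    (h : a + b * (2 * Real.cos (Real.pi / (2 * p))) = 0) :
    a = 0 ∧ b = 0 := by
  have hb0 : b = 0 := by
    by_contra hb0
    refine cos_pi_div_two_mul_notMem_adjoin_cos_pi_div hp ?_
    have hcos : cos (π / (2 * p)) = -a / (2 * b) := by
      field_simp
      linarith
    rw [hcos]
    exact div_mem (neg_mem ha) (mul_mem (ofNat_mem _ 2) hb)
  exact ⟨by simpa [hb0] using h, hb0⟩
end

section
/- Let U : ℕ → ℝ → ℝ → ℝ be defined by U 0 x y = 1, U 1 x y = 2x, U (2i) x y = 2y·U (2i−1) x y − U (2i−2) x y and U (2i+1) x y = 2x·U (2i) x y − U (2i−1) x y for i ≥ 1. Then for every integer p ≥ 2, the set { s : ℝ | ∃ x y : ℝ, x·y = s ∧ U (2p−2) x y = 1 } is finite. -/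
/-!
Both `U (2i) x y` and `U (2i+1) x y / (2x)` depend on `x, y` only through `s = x y`: they are
polynomials `A_i(s)`, `B_i(s)` with `A_{i+1} = 4 s B_i - A_i` and `B_{i+1} = A_{i+1} - B_i`.
Both have degree `i` with leading coefficient `4 ^ i`, so for `p ≥ 2` every admissible product
`s` is a root of the nonzero polynomial `A_{p-1} - 1`.
-/

open Polynomial

namespace PluckerRecurrence

variable {R : Type*} [CommRing R]

/-- The pair `(A_i, B_i)`. -/
noncomputable def evenOddPoly : ℕ → R[X] × R[X]
  | 0 => (1, 1)
  | i + 1 =>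
    let a := C 4 * X * (evenOddPoly i).2 - (evenOddPoly i).1
    (a, a - (evenOddPoly i).2)

lemma evenOddPoly_succ_fst (i : ℕ) :
    (evenOddPoly (R := R) (i + 1)).1 = C 4 * X * (evenOddPoly i).2 - (evenOddPoly i).1 :=
  rfl

lemma evenOddPoly_succ_snd (i : ℕ) :
    (evenOddPoly (R := R) (i + 1)).2 = (evenOddPoly (i + 1)).1 - (evenOddPoly i).2 :=
  rfl

lemma natDegree_C_mul_X_mul_le (c : R) (q : R[X]) :
    (C c * X * q).natDegree ≤ q.natDegree + 1 := by
  rw [mul_assoc]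
  calc (C c * (X * q)).natDegree ≤ (X * q).natDegree := natDegree_C_mul_le _ _
    _ ≤ (X : R[X]).natDegree + q.natDegree := natDegree_mul_le
    _ ≤ q.natDegree + 1 := by have := natDegree_X_le (R := R); omega

lemma evenOddPoly_natDegree_le_and_coeff (i : ℕ) :
    (evenOddPoly (R := R) i).1.natDegree ≤ i ∧ (evenOddPoly (R := R) i).2.natDegree ≤ i ∧
      (evenOddPoly (R := R) i).1.coeff i = 4 ^ i ∧ (evenOddPoly (R := R) i).2.coeff i = 4 ^ i := by
  induction i with
  | zero => simp [evenOddPoly]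
  | succ i ih =>
    obtain ⟨hA, hB, hAc, hBc⟩ := ih
    have hA' : (evenOddPoly (R := R) (i + 1)).1.natDegree ≤ i + 1 :=
      (natDegree_sub_le_of_le (m := i + 1)
        ((natDegree_C_mul_X_mul_le 4 _).trans (by omega)) hA).trans (by omega)
    have hAc' : (evenOddPoly (R := R) (i + 1)).1.coeff (i + 1) = 4 ^ (i + 1) := by
      rw [evenOddPoly_succ_fst, coeff_sub, mul_assoc, coeff_C_mul, coeff_X_mul, hBc,
        coeff_eq_zero_of_natDegree_lt (by omega), pow_succ]
      ring
    refine ⟨hA', (natDegree_sub_le_of_le hA' hB).trans (by omega), hAc', ?_⟩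
    rw [evenOddPoly_succ_snd, coeff_sub, hAc', coeff_eq_zero_of_natDegree_lt (by omega), sub_zero]

lemma evenOddPoly_fst_sub_one_ne_zero [IsDomain R] [CharZero R] {i : ℕ} (hi : 1 ≤ i) :
    (evenOddPoly (R := R) i).1 - 1 ≠ 0 := by
  intro h
  have hcoeff := congrArg (coeff · i) h
  simp only [coeff_sub, (evenOddPoly_natDegree_le_and_coeff i).2.2.1, coeff_one,
    if_neg (by omega : i ≠ 0), sub_zero, coeff_zero] at hcoeff
  exact pow_ne_zero i (by norm_num : (4 : R) ≠ 0) hcoeff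

lemma eval_evenOddPoly (U : ℕ → R → R → R)
    (hU0 : ∀ x y : R, U 0 x y = 1)
    (hU1 : ∀ x y : R, U 1 x y = 2 * x)
    (hUeven : ∀ i : ℕ, 1 ≤ i → ∀ x y : R,
      U (2 * i) x y = 2 * y * U (2 * i - 1) x y - U (2 * i - 2) x y)
    (hUodd : ∀ i : ℕ, 1 ≤ i → ∀ x y : R,
      U (2 * i + 1) x y = 2 * x * U (2 * i) x y - U (2 * i - 1) x y)
    (i : ℕ) (x y : R) :
    U (2 * i) x y = (evenOddPoly i).1.eval (x * y) ∧
      U (2 * i + 1) x y = 2 * x * (evenOddPoly i).2.eval (x * y) := by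
  induction i with
  | zero => simp [evenOddPoly, hU0, hU1]
  | succ i ih =>
    obtain ⟨hA, hB⟩ := ih
    have hA' : U (2 * (i + 1)) x y = (evenOddPoly (i + 1)).1.eval (x * y) := by
      rw [hUeven (i + 1) (by omega), show 2 * (i + 1) - 1 = 2 * i + 1 by omega,
        show 2 * (i + 1) - 2 = 2 * i by omega, hA, hB]
      simp only [evenOddPoly_succ_fst, eval_sub, eval_mul, eval_C, eval_X]
      ring
    refine ⟨hA', ?_⟩
    rw [hUodd (i + 1) (by omega), show 2 * (i + 1) - 1 = 2 * i + 1 by omega, hA', hB,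
      evenOddPoly_succ_snd, eval_sub]
    ring

end PluckerRecurrence

open PluckerRecurrence in
theorem stmt_10 (U : ℕ → ℝ → ℝ → ℝ)
    (hU0 : ∀ x y : ℝ, U 0 x y = 1)
    (hU1 : ∀ x y : ℝ, U 1 x y = 2 * x)
    (hUeven : ∀ i : ℕ, 1 ≤ i → ∀ x y : ℝ,
      U (2 * i) x y = 2 * y * U (2 * i - 1) x y - U (2 * i - 2) x y)
    (hUodd : ∀ i : ℕ, 1 ≤ i → ∀ x y : ℝ,
      U (2 * i + 1) x y = 2 * x * U (2 * i) x y - U (2 * i - 1) x y)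
    (p : ℕ) (hp : 2 ≤ p) :
    Set.Finite { s : ℝ | ∃ x y : ℝ, x * y = s ∧ U (2 * p - 2) x y = 1 } := by
  refine (finite_setOfPred_isRoot (evenOddPoly_fst_sub_one_ne_zero (R := ℝ)
    (by omega : 1 ≤ p - 1))).subset ?_
  rintro s ⟨x, y, rfl, hU⟩
  rw [show 2 * p - 2 = 2 * (p - 1) by omega,
    (eval_evenOddPoly U hU0 hU1 hUeven hUodd (p - 1) x y).1] at hU
  simp [IsRoot, hU]
end

section
/- In ℝ⁴, the plane spanned by the vectors u₂(√2) = (−√2, 0, √2, 2) and v₂(√2) = (0, 1, √2, 1) equals the plane spanned by the vectors (cos(0·π/4), cos(1·π/4), cos(2·π/4), cos(3·π/4)) and (sin(0·π/4), sin(1·π/4), sin(2·π/4), sin(3·π/4)); i.e. Submodule.span ℝ {u₂(√2), v₂(√2)} = Submodule.span ℝ {(cos(kπ/4))_{k=0..3}, (sin(kπ/4))_{k=0..3}}. -/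
/-!
Writing `c = (cos (kπ/4))ₖ = (1, √2/2, 0, -√2/2)` and `s = (sin (kπ/4))ₖ = (0, √2/2, 1, √2/2)`,
one has `u₂(√2) = √2 • (s - c)` and `v₂(√2) = √2 • s`: the two pairs differ by an invertible
change of basis, so they span the same plane.
-/

open Real Submodule Pointwise

theorem Submodule.span_pair_sub_left' {R M : Type*} [Ring R] [AddCommGroup M] [Module R M]
    (x y : M) : span R {y - x, y} = span R {x, y} := by
  have hy : y ∈ span R {y - x, y} := subset_span (by simp)
  have hyx : y - x ∈ span R {y - x, y} := subset_span (by simp)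
  apply le_antisymm <;> rw [span_le, Set.insert_subset_iff, Set.singleton_subset_iff]
  · exact ⟨sub_mem (subset_span (by simp)) (subset_span (by simp)), subset_span (by simp)⟩
  · exact ⟨by simpa using sub_mem hy hyx, hy⟩

lemma cos_mul_pi_div_four :
    (fun k : Fin 4 => cos (k * π / 4)) = ![1, √2 / 2, 0, -(√2 / 2)] := by
  funext k
  fin_cases k
  · simp
  · simp
  · simp [show (2 : ℝ) * π / 4 = π / 2 by ring]
  · simp [show (3 : ℝ) * π / 4 = π - π / 4 by ring]

lemma sin_mul_pi_div_four :
    (fun k : Fin 4 => sin (k * π / 4)) = ![0, √2 / 2, 1, √2 / 2] := by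
  funext k
  fin_cases k
  · simp
  · simp
  · simp [show (2 : ℝ) * π / 4 = π / 2 by ring]
  · simp [show (3 : ℝ) * π / 4 = π - π / 4 by ring]

theorem stmt_11 :
    Submodule.span ℝ
        ({![-(Real.sqrt 2), 0, Real.sqrt 2, 2], ![0, 1, Real.sqrt 2, 1]} : Set (Fin 4 → ℝ)) =
      Submodule.span ℝ
        ({(fun k : Fin 4 => Real.cos (k * Real.pi / 4)),
          (fun k : Fin 4 => Real.sin (k * Real.pi / 4))} : Set (Fin 4 → ℝ)) := by
  have hsq : √2 * √2 = 2 := mul_self_sqrt zero_le_two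
  have hu : ![-√2, 0, √2, 2] = √2 • (![0, √2 / 2, 1, √2 / 2] - ![1, √2 / 2, 0, -(√2 / 2)]) := by
    ext k; fin_cases k <;> simp
  have hv : ![0, 1, √2, 1] = √2 • ![0, √2 / 2, 1, √2 / 2] := by
    ext k; fin_cases k <;> simp <;> linarith
  have hunit : IsUnit √2 := (sqrt_pos.2 zero_lt_two).ne'.isUnit
  rw [hu, hv, ← Set.smul_set_singleton, ← Set.smul_set_insert, span_smul_eq_of_isUnit _ _ hunit,
    span_pair_sub_left', cos_mul_pi_div_four, sin_mul_pi_div_four]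
end

section
/- For t ∈ ℝ let G_{ij}(t) = u_i(t)·v_j(t) − u_j(t)·v_i(t) for 1 ≤ i < j ≤ 4, where u(t) = (−t, 0, t, 2) and v(t) = (0, 1, t, 1). Then for all integers a, b, c and all 1 ≤ i < j < k ≤ 4: if a·G_{jk}(√2) − b·G_{ik}(√2) + c·G_{ij}(√2) = 0, then a·G_{jk}(t) − b·G_{ik}(t) + c·G_{ij}(t) = 0 for every real t ≠ 0. -/
/-!
Write `u(t) = t • u₁ + u₀` and `v(t) = t • v₁ + v₀` with integer vectors, so that
`G(t) = t² (u₁ ∧ v₁) + t (u₁ ∧ v₀ + u₀ ∧ v₁) + u₀ ∧ v₀`. A subperiod relation evaluated at `t` is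
therefore `K + L t + Q t²` with `K L Q ∈ ℤ`. Since `u₁, v₁` are supported on `{0, 2}` and `u₀, v₀`
on `{1, 3}`, the quadratic part only sees the pair `{0, 2}` and the constant part only the pair
`{1, 3}`; three indices cannot cover both pairs, so `K = 0` or `Q = 0`. Then vanishing at `√2`
forces `K = L = Q = 0` by irrationality of `√2`, and the relation holds for every `t`.
-/

/-- `u t = (-t, 0, t, 2)`, the first basis vector of the plane `E_t` (8-fold family). -/
noncomputable def u8 (t : ℝ) : Fin 4 → ℝ := ![-t, 0, t, 2]

/-- `v t = (0, 1, t, 1)`, the second basis vector of the plane `E_t` (8-fold family). -/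
noncomputable def v8 (t : ℝ) : Fin 4 → ℝ := ![0, 1, t, 1]

/-- Grassmann coordinates of `E_t`. -/
noncomputable def G8 (t : ℝ) (i j : Fin 4) : ℝ := u8 t i * v8 t j - u8 t j * v8 t i

section Wedge

variable {ι R : Type*} [CommRing R]

def wedge (x y : ι → R) (p q : ι) : R := x p * y q - x q * y p

lemma wedge_smul_add (t : R) (x₁ x₀ y₁ y₀ : ι → R) (p q : ι) :
    wedge (t • x₁ + x₀) (t • y₁ + y₀) p q =
      t ^ 2 * wedge x₁ y₁ p q + t * (wedge x₁ y₀ p q + wedge x₀ y₁ p q) + wedge x₀ y₀ p q := by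
  simp only [wedge, Pi.add_apply, Pi.smul_apply, smul_eq_mul]
  ring

@[simp, norm_cast]
lemma intCast_wedge (x y : ι → ℤ) (p q : ι) :
    ((wedge x y p q : ℤ) : R) = wedge (Int.cast ∘ x) (Int.cast ∘ y) p q := by
  simp [wedge]

end Wedge

lemma eq_zero_of_intCast_add_intCast_mul_sqrt_two {m n : ℤ} (h : m + n * √2 = 0) :
    m = 0 ∧ n = 0 := by
  obtain rfl : n = 0 := by
    by_contra hn
    exact ((irrational_sqrt_two.intCast_mul hn).intCast_add m).ne_zero h
  exact ⟨by simpa using h, rfl⟩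

lemma eq_zero_of_quadratic_eval_sqrt_two {K L Q : ℤ} (hKQ : K = 0 ∨ Q = 0)
    (h : K + L * √2 + Q * √2 ^ 2 = 0) : K = 0 ∧ L = 0 ∧ Q = 0 := by
  rw [Real.sq_sqrt zero_le_two] at h
  obtain ⟨hKQ', hL⟩ :=
    eq_zero_of_intCast_add_intCast_mul_sqrt_two (m := K + 2 * Q) (n := L) (by push_cast; linarith)
  omega

def u8Lin : Fin 4 → ℤ := ![-1, 0, 1, 0]
def u8Const : Fin 4 → ℤ := ![0, 0, 0, 2]
def v8Lin : Fin 4 → ℤ := ![0, 0, 1, 0]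
def v8Const : Fin 4 → ℤ := ![0, 1, 0, 1]

lemma u8_eq (t : ℝ) : u8 t = t • (Int.cast ∘ u8Lin) + Int.cast ∘ u8Const := by
  ext p
  fin_cases p <;> simp [u8, u8Lin, u8Const]

lemma v8_eq (t : ℝ) : v8 t = t • (Int.cast ∘ v8Lin) + Int.cast ∘ v8Const := by
  ext p
  fin_cases p <;> simp [v8, v8Lin, v8Const]

lemma G8_eq (t : ℝ) (p q : Fin 4) :
    G8 t p q = t ^ 2 * wedge u8Lin v8Lin p q
      + t * (wedge u8Lin v8Const p q + wedge u8Const v8Lin p q) + wedge u8Const v8Const p q := by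
  rw [show G8 t p q = wedge (u8 t) (v8 t) p q from rfl, u8_eq, v8_eq, wedge_smul_add]
  simp only [intCast_wedge]

lemma wedge_const_eq_zero_or_wedge_lin_eq_zero (i j k : Fin 4) :
    (wedge u8Const v8Const j k = 0 ∧ wedge u8Const v8Const i k = 0 ∧
        wedge u8Const v8Const i j = 0) ∨
      (wedge u8Lin v8Lin j k = 0 ∧ wedge u8Lin v8Lin i k = 0 ∧ wedge u8Lin v8Lin i j = 0) := by
  revert i j k
  decide

theorem stmt_16_general (a b c : ℤ) (i j k : Fin 4)
    (h : (a : ℝ) * G8 (Real.sqrt 2) j k - (b : ℝ) * G8 (Real.sqrt 2) i k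
        + (c : ℝ) * G8 (Real.sqrt 2) i j = 0) :
    ∀ t : ℝ, t ≠ 0 → (a : ℝ) * G8 t j k - (b : ℝ) * G8 t i k + (c : ℝ) * G8 t i j = 0 := by
  intro t _
  set K := a * wedge u8Const v8Const j k - b * wedge u8Const v8Const i k
    + c * wedge u8Const v8Const i j
  set L := a * (wedge u8Lin v8Const j k + wedge u8Const v8Lin j k)
    - b * (wedge u8Lin v8Const i k + wedge u8Const v8Lin i k)
    + c * (wedge u8Lin v8Const i j + wedge u8Const v8Lin i j)
  set Q := a * wedge u8Lin v8Lin j k - b * wedge u8Lin v8Lin i k + c * wedge u8Lin v8Lin i j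
  have hG (s : ℝ) :
      (a : ℝ) * G8 s j k - b * G8 s i k + c * G8 s i j = K + L * s + Q * s ^ 2 := by
    simp only [G8_eq, K, L, Q]
    push_cast
    ring
  have hKQ : K = 0 ∨ Q = 0 := by
    rcases wedge_const_eq_zero_or_wedge_lin_eq_zero i j k with ⟨h₁, h₂, h₃⟩ | ⟨h₁, h₂, h₃⟩ <;>
      simp [K, Q, h₁, h₂, h₃]
  obtain ⟨hK, hL, hQ⟩ := eq_zero_of_quadratic_eval_sqrt_two hKQ (hG √2 ▸ h)
  simp [hG, hK, hL, hQ]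

theorem stmt_16 (a b c : ℤ) (i j k : Fin 4) (hij : i < j) (hjk : j < k)
    (h : (a : ℝ) * G8 (Real.sqrt 2) j k - (b : ℝ) * G8 (Real.sqrt 2) i k
        + (c : ℝ) * G8 (Real.sqrt 2) i j = 0) :
    ∀ t : ℝ, t ≠ 0 → (a : ℝ) * G8 t j k - (b : ℝ) * G8 t i k + (c : ℝ) * G8 t i j = 0 :=
  stmt_16_general a b c i j k h
end
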